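/- Let r be a prime and let 𝓡′ be the subring of ℤ[a^{±1}, z^{±1}] generated by a, a⁻¹, z and (a + a⁻¹)z⁻¹. Suppose w ∈ 𝓡′ is written as w = Σ_i v_i(a) z^i with v_i(a) ∈ ℤ[a^{±1}]. Then w lies in the ideal (r, z^r) of 𝓡′ generated by r and z^r if and only if for every i ≤ r the coefficient v_i(a) lies in the ideal of ℤ[a^{±1}] generated by r and (a + a⁻¹)^{r−i}. -/

import Mathlib

open LaurentPolynomial

/-- The Laurent polynomial ring `ℤ[a^{±1}, z^{±1}]`, with `z` the outer variable
and `a` the inner variable. -/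
abbrev LL : Type := LaurentPolynomial (LaurentPolynomial ℤ)

/-- The variable `a`. -/
noncomputable def aA : LL := C (T 1)

/-- The variable `a⁻¹`. -/
noncomputable def aAinv : LL := C (T (-1))

/-- The variable `z`. -/
noncomputable def zZ : LL := T 1

/-- The variable `z⁻¹`. -/
noncomputable def zZinv : LL := T (-1)

/-- The subring `𝓡` of `ℤ[a^{±1}, z^{±1}]` generated by `a`, `a⁻¹`, `z` and
`(a + a⁻¹)z⁻¹`. -/
noncomputable def Rcal' : Subring LL :=
  Subring.closure {aA, aAinv, zZ, (aA + aAinv) * zZinv}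

lemma zZ_pow_mem (r : ℕ) : zZ ^ r ∈ Rcal' :=
  pow_mem (Subring.subset_closure (by simp)) r

/-!
With `R = ℤ[a^{±1}]` and `c = a + a⁻¹`, the ring `𝓡′ = R[z, c z⁻¹]` consists of the Laurent
polynomials whose `z^i`-coefficient is divisible by `c^{-i}` for `i < 0`. An element `x r + y z^r`
of `(r, z^r)` has `z^i`-coefficient `x_i r + y_{i-r}`, and `c^{r-i}` divides `y_{i-r}`.
Conversely a coefficient `v_i = α r + β c^{r-i}` is realised by the single term
`(α z^i) r + (β c^{r-i} z^{i-r}) z^r`, once `α z^i ∈ 𝓡′`: `c^{-i}` divides `α r`, and `r` is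
prime in `R` without dividing `c`, so `c^{-i}` divides `α`.
-/

theorem Prime.dvd_of_dvd_mul_of_not_dvd {M : Type*} [CommMonoidWithZero M] [IsLeftCancelMulZero M]
    {p d x : M} (hp : Prime p) (hd : ¬p ∣ d) (h : d ∣ p * x) : d ∣ x := by
  obtain ⟨s, hs⟩ := h
  obtain ⟨t, rfl⟩ : p ∣ s := (hp.dvd_or_dvd ⟨x, hs.symm⟩).resolve_left hd
  exact ⟨t, mul_left_cancel₀ hp.ne_zero (by rw [hs, mul_left_comm])⟩

theorem Subring.mem_ideal_span_pair_iff {A : Type*} [CommRing A] {S : Subring A} {a b w : S} :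
    w ∈ Ideal.span {a, b} ↔ (w : A) ∈ Submodule.span S {(a : A), (b : A)} := by
  rw [Ideal.mem_span_pair, Submodule.mem_span_pair]
  simp only [Subring.smul_def, smul_eq_mul, Subtype.ext_iff, Subring.coe_add, Subring.coe_mul]

namespace LaurentPolynomial

theorem coeff_sum_C_mul_T {R : Type*} [Semiring R] {u : ℤ → R} {s : Finset ℤ}
    (hu : ∀ i ∉ s, u i = 0) (j : ℤ) : (∑ i ∈ s, C (u i) * T i).coeff j = u j := by
  classical
  simp only [← single_eq_C_mul_T, AddMonoidAlgebra.coeff_sum, Finset.sum_apply',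
    AddMonoidAlgebra.coeff_single, Finsupp.single_apply, Finset.sum_ite_eq']
  split_ifs with hj
  · rfl
  · exact (hu j hj).symm

variable {R : Type*} [CommRing R]

open Polynomial in
theorem prime_C {p : R} (hp : Prime p) : Prime (C p : R[T;T⁻¹]) := by
  have hdisj : Disjoint (Submonoid.powers (X : R[X]) : Set R[X]) (Ideal.span {Polynomial.C p}) := by
    rw [Set.disjoint_left]
    rintro _ ⟨n, rfl⟩ hn
    rw [SetLike.mem_coe, Ideal.mem_span_singleton, C_dvd_iff_dvd_coeff] at hn
    exact hp.not_isUnit (isUnit_of_dvd_one (by simpa using hn n))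
  have := IsLocalization.isPrime_of_isPrime_disjoint (Submonoid.powers X) R[T;T⁻¹] _
    ((Ideal.span_singleton_prime (Polynomial.C_ne_zero.mpr hp.ne_zero)).mpr
      (prime_C_iff.mpr hp)) hdisj
  rw [Ideal.map_span, Set.image_singleton, algebraMap_eq_toLaurent, toLaurent_C] at this
  refine (Ideal.span_singleton_prime fun h => hp.ne_zero ?_).mp this
  simpa using congr_arg (fun f : R[T;T⁻¹] => f.coeff 0) h

theorem not_C_dvd_T_add_T {p : R} (hp : ¬IsUnit p) {m n : ℤ} (hmn : m ≠ n) :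
    ¬C p ∣ T m + T n := by
  rintro ⟨g, hg⟩
  have hm := congr_arg (fun f : R[T;T⁻¹] => f.coeff m) hg
  simp only [AddMonoidAlgebra.coeff_add, Finsupp.add_apply, T_apply, ← single_eq_C,
    AddMonoidAlgebra.coeff_single_mul_apply, hmn.symm] at hm
  exact hp (.of_mul_eq_one _ (by simpa using hm.symm))

theorem forall_pow_dvd_coeff_single_iff {c v : R} {n : ℤ} :
    (∀ i, c ^ (-i).toNat ∣ (.single n v : R[T;T⁻¹]).coeff i) ↔ c ^ (-n).toNat ∣ v := by
  refine ⟨fun h => by simpa only [AddMonoidAlgebra.coeff_single, Finsupp.single_eq_same] using h n,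
    fun h i => ?_⟩
  rcases eq_or_ne n i with rfl | hi
  · simpa only [AddMonoidAlgebra.coeff_single, Finsupp.single_eq_same] using h
  · simp only [AddMonoidAlgebra.coeff_single, Finsupp.single_eq_of_ne hi.symm, dvd_zero]

/-- The subring `R[z, c z⁻¹]` of `R[z, z⁻¹]`. -/
def coeffDvdSubring (c : R) : Subring R[T;T⁻¹] where
  carrier := {f | ∀ i : ℤ, c ^ (-i).toNat ∣ f.coeff i}
  zero_mem' _ := dvd_zero _
  add_mem' hf hg i := dvd_add (hf i) (hg i)
  neg_mem' hf i := (hf i).neg_right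
  one_mem' := (forall_pow_dvd_coeff_single_iff (n := 0) (v := (1 : R))).mpr (by simp)
  mul_mem' {f g} hf hg i := by
    classical
    rw [AddMonoidAlgebra.coeff_mul]
    refine Finset.dvd_sum fun j _ => Finset.dvd_sum fun k _ => ?_
    dsimp only
    split_ifs with hjk
    · exact (pow_dvd_pow c (by omega)).trans (pow_add c _ _ ▸ mul_dvd_mul (hf j) (hg k))
    · exact dvd_zero _

theorem single_mem_coeffDvdSubring {c v : R} {n : ℤ} :
    .single n v ∈ coeffDvdSubring c ↔ c ^ (-n).toNat ∣ v :=
  forall_pow_dvd_coeff_single_iff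

end LaurentPolynomial

theorem aA_add_aAinv_mul_zZinv :
    (aA + aAinv) * zZinv = (.single (-1) (T 1 + T (-1)) : LL) := by
  rw [aA, aAinv, zZinv, ← map_add, single_eq_C_mul_T]

theorem Rcal'_le_coeffDvdSubring : Rcal' ≤ coeffDvdSubring (T 1 + T (-1)) := by
  rw [Rcal', Subring.closure_le]
  rintro _ (rfl | rfl | rfl | rfl) <;> try rw [aA_add_aAinv_mul_zZinv]
  all_goals exact single_mem_coeffDvdSubring.mpr (by simp)

theorem C_T_eq_aA_pow_mul_aAinv_pow (n : ℤ) :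
    (C (T n) : LL) = aA ^ n.toNat * aAinv ^ (-n).toNat := by
  rw [aA, aAinv, ← map_pow, ← map_pow, ← map_mul, T_pow, T_pow, ← T_add]
  congr 2
  omega

theorem C_mem_Rcal' (v : LaurentPolynomial ℤ) : (C v : LL) ∈ Rcal' := by
  have haA : aA ∈ Rcal' := Subring.subset_closure (by simp)
  have haAinv : aAinv ∈ Rcal' := Subring.subset_closure (by simp)
  induction v using LaurentPolynomial.induction_on' with
  | add p q hp hq => rw [map_add]; exact add_mem hp hq
  | C_mul_T n a =>
    rw [map_mul, eq_intCast C a, map_intCast, C_T_eq_aA_pow_mul_aAinv_pow]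
    exact mul_mem (intCast_mem _ a) (mul_mem (pow_mem haA _) (pow_mem haAinv _))

theorem single_mem_Rcal' {n : ℤ} {v : LaurentPolynomial ℤ}
    (h : (T 1 + T (-1)) ^ (-n).toNat ∣ v) : (.single n v : LL) ∈ Rcal' := by
  obtain ⟨q, rfl⟩ := h
  have hdecomp : (.single n ((T 1 + T (-1)) ^ (-n).toNat * q) : LL) =
      C q * zZ ^ n.toNat * ((aA + aAinv) * zZinv) ^ (-n).toNat := by
    rw [aA_add_aAinv_mul_zZinv, AddMonoidAlgebra.single_pow, zZ, T_pow, mul_one,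
      ← single_eq_C_mul_T, AddMonoidAlgebra.single_mul_single]
    congr 1
    · simp only [smul_neg, nsmul_eq_mul, mul_one]; omega
    · ring
  rw [hdecomp]
  refine mul_mem (mul_mem (C_mem_Rcal' q) (pow_mem ?_ _)) (pow_mem ?_ _) <;>
    exact Subring.subset_closure (by simp)

theorem Rcal'_eq_coeffDvdSubring : Rcal' = coeffDvdSubring (T 1 + T (-1)) := by
  refine le_antisymm Rcal'_le_coeffDvdSubring fun f hf => ?_
  rw [← AddMonoidAlgebra.sum_coeff_single f]
  exact sum_mem fun i _ => single_mem_Rcal' (hf i)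

theorem prime_natCast_laurentPolynomial {r : ℕ} (hr : r.Prime) :
    Prime (r : LaurentPolynomial ℤ) := by
  simpa only [map_natCast] using prime_C (Nat.prime_iff_prime_int.mp hr)

theorem not_natCast_dvd_T_one_add_T_neg_one {r : ℕ} (hr : r.Prime) :
    ¬(r : LaurentPolynomial ℤ) ∣ T 1 + T (-1) := by
  rw [← map_natCast C]
  exact not_C_dvd_T_add_T (by simpa [Int.isUnit_iff] using hr.ne_one) (by decide)

theorem natCast_eq_single_zero (r : ℕ) : (r : LL) = .single 0 (r : LaurentPolynomial ℤ) := by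
  rw [single_eq_C, map_natCast]

theorem coeff_mul_natCast_add_mul_zZ_pow (r : ℕ) (x y : LL) (i : ℤ) :
    (x * r + y * zZ ^ r).coeff i = x.coeff i * r + y.coeff (i - r) := by
  rw [natCast_eq_single_zero, zZ, T_pow, mul_one, T, AddMonoidAlgebra.coeff_add,
    Finsupp.add_apply, AddMonoidAlgebra.coeff_mul_single_apply,
    AddMonoidAlgebra.coeff_mul_single_apply, neg_zero, add_zero, mul_one, sub_eq_add_neg]

theorem single_mul_natCast_add_mul_zZ_pow (r : ℕ) (i : ℤ) (a b : LaurentPolynomial ℤ) :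
    (.single i (a * r + b) : LL) = .single i a * r + .single (i - r) b * zZ ^ r := by
  rw [natCast_eq_single_zero, zZ, T_pow, mul_one, T,
    AddMonoidAlgebra.single_mul_single, AddMonoidAlgebra.single_mul_single, add_zero,
    sub_add_cancel, mul_one, AddMonoidAlgebra.single_add]

theorem coeff_mem_span_of_mem_span {r : ℕ} {f : LL}
    (hf : f ∈ Submodule.span Rcal' {(r : LL), zZ ^ r}) (i : ℤ) :
    f.coeff i ∈ Ideal.span {(r : LaurentPolynomial ℤ), (T 1 + T (-1)) ^ ((r : ℤ) - i).toNat} := by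
  obtain ⟨x, y, rfl⟩ := Submodule.mem_span_pair.mp hf
  have hy : (T 1 + T (-1)) ^ ((r : ℤ) - i).toNat ∣ (y : LL).coeff (i - r) := by
    simpa only [neg_sub] using Rcal'_le_coeffDvdSubring y.2 (i - r)
  rw [Subring.smul_def, Subring.smul_def, smul_eq_mul, smul_eq_mul,
    coeff_mul_natCast_add_mul_zZ_pow]
  exact add_mem (Ideal.mul_mem_left _ _ (Ideal.subset_span (by simp)))
    (Ideal.mem_of_dvd _ hy (Ideal.subset_span (by simp)))

theorem single_mem_span_of_mem_span {r : ℕ} (hr : r.Prime) {i : ℤ} {v : LaurentPolynomial ℤ}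
    (hdvd : (T 1 + T (-1)) ^ (-i).toNat ∣ v)
    (hv : v ∈ Ideal.span {(r : LaurentPolynomial ℤ), (T 1 + T (-1)) ^ ((r : ℤ) - i).toNat}) :
    (.single i v : LL) ∈ Submodule.span Rcal' {(r : LL), zZ ^ r} := by
  obtain ⟨a, b, rfl⟩ := Ideal.mem_span_pair.mp hv
  have hr' := prime_natCast_laurentPolynomial hr
  have ha : (T 1 + T (-1)) ^ (-i).toNat ∣ a := by
    refine hr'.dvd_of_dvd_mul_of_not_dvd
      (fun h => not_natCast_dvd_T_one_add_T_neg_one hr (hr'.dvd_of_dvd_pow h)) ?_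
    have hpow : (T 1 + T (-1) : LaurentPolynomial ℤ) ^ (-i).toNat ∣
        (T 1 + T (-1)) ^ ((r : ℤ) - i).toNat :=
      pow_dvd_pow _ (by omega)
    simpa [mul_comm] using dvd_sub hdvd (hpow.mul_left b)
  rw [single_mul_natCast_add_mul_zZ_pow]
  refine add_mem
    (Submodule.smul_mem _ (⟨.single i a, ?_⟩ : Rcal') (Submodule.subset_span (by simp)))
    (Submodule.smul_mem _ (⟨.single (i - r) _, ?_⟩ : Rcal') (Submodule.subset_span (by simp))) <;>
    rw [Rcal'_eq_coeffDvdSubring, single_mem_coeffDvdSubring]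
  · exact ha
  · rw [neg_sub]
    exact dvd_mul_left _ _

theorem mem_span_iff_forall_coeff_mem {r : ℕ} (hr : r.Prime) {f : LL} (hf : f ∈ Rcal') :
    f ∈ Submodule.span Rcal' {(r : LL), zZ ^ r} ↔ ∀ i : ℤ,
      f.coeff i ∈ Ideal.span {(r : LaurentPolynomial ℤ), (T 1 + T (-1)) ^ ((r : ℤ) - i).toNat} := by
  refine ⟨coeff_mem_span_of_mem_span, fun h => ?_⟩
  rw [← AddMonoidAlgebra.sum_coeff_single f]
  exact sum_mem fun i _ => single_mem_span_of_mem_span hr (Rcal'_le_coeffDvdSubring hf i) (h i)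

theorem stmt_4 (r : ℕ) (hr : r.Prime) (w : Rcal')
    (u : ℤ → LaurentPolynomial ℤ) (s : Finset ℤ)
    (hw : (w : LL) = ∑ i ∈ s, C (u i) * T i)
    (hu : ∀ i ∉ s, u i = 0) :
    w ∈ Ideal.span ({(r : Rcal'), ⟨zZ ^ r, zZ_pow_mem r⟩} : Set Rcal') ↔
      ∀ i : ℤ, i ≤ (r : ℤ) →
        u i ∈ Ideal.span ({(r : LaurentPolynomial ℤ),
          (T 1 + T (-1)) ^ ((r : ℤ) - i).toNat} : Set (LaurentPolynomial ℤ)) := by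
  have hcoeff : ∀ i, (w : LL).coeff i = u i := by
    rw [hw]
    exact coeff_sum_C_mul_T hu
  rw [Subring.mem_ideal_span_pair_iff, SubringClass.coe_natCast,
    mem_span_iff_forall_coeff_mem hr w.2]
  simp only [hcoeff]
  refine ⟨fun h i _ => h i, fun h i => ?_⟩
  rcases le_or_gt i r with hi | hi
  · exact h i hi
  · rw [Int.toNat_eq_zero.mpr (by omega), pow_zero]
    exact Ideal.mem_span_pair.mpr ⟨0, u i, by ring⟩
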